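/- Let p be a positive rational with √p irrational, and let x₁ = a₁ + b₁√p, …, xₙ = aₙ + bₙ√p (n ≥ 2) with all aᵢ, bᵢ ∈ ℚ, all xᵢ > 0, and such that xᵢ/xⱼ ∉ ℚ and xᵢ·xⱼ ∉ ℚ whenever i ≠ j. Suppose aᵢ − bᵢ√p < 0 for all i. If a rectangle of aspect ratio z > 0 admits a diverse tiling by rectangles with aspect ratios x₁, …, xₙ, then z = e + f√p for some rationals e, f with f > 0 and |e|/f < max_{1 ≤ i ≤ n} |aᵢ|/bᵢ. -/

import Mathlib

/-!
Fix an embedding `τ : F → ℝ` of a field (here `F = ℚ(√p)`), a second embedding `σ` (here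
`√p ↦ -√p`) and an `F`-linear map `G : ℝ → F`. Any expression `B s t` that is bilinear in
`(τ (G s), σ (G s))` and `(τ (G t), σ (G t))` is biadditive, and cutting a tiling of
`[0,1] × [0,z]` along the grid of all tile sides gives `B 1 z = ∑ B (w k) (h k)`. For a tile of
ratio `τ ξ`, the term `B w (τ ξ * w)` is a binary quadratic form in `(τ (G w), σ (G w))` with
coefficients given by `τ ξ` and `σ ξ`.

With `B s t = σ (G s) * σ (G t)` every tile contributes `σ ξ * σ (G w) ^ 2 ≤ 0`; taking
`G 1 = G z = 1` shows `z ∈ F`, and then `G 1 = 1` gives `σ z < 0`. With `M = max |aᵢ| / bᵢ < √p`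
and `c = M² / (p - M²)`, the discriminant of `-x u² + (x + σ x) u v + c σ x v²` at
`x = a + b √p` has the sign of `a² - M² b²`. So the form is negative semidefinite on every tile and
definite on a tile with `|aᵢ| / bᵢ < M`, which exists since the ratios `|aᵢ| / bᵢ` are pairwise
distinct. If `|e| / f ≥ M`, the form of `z` is isotropic, and scaling `τ ∘ G` by the isotropic
direction gives `B 1 z = 0 > ∑ B (w k) (h k)`.
-/

/-- A tiling of the rectangle `[0,1] × [0,r]` by finitely many closed
axis-parallel rectangles with positive side lengths, covering the rectangle
and having pairwise disjoint interiors. -/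
structure RectTiling (r : ℝ) where
  m : ℕ
  px : Fin m → ℝ
  py : Fin m → ℝ
  w : Fin m → ℝ
  h : Fin m → ℝ
  w_pos : ∀ k, 0 < w k
  h_pos : ∀ k, 0 < h k
  cover : (Set.Icc (0:ℝ) 1 ×ˢ Set.Icc (0:ℝ) r) =
      ⋃ k, Set.Icc (px k) (px k + w k) ×ˢ Set.Icc (py k) (py k + h k)
  disj : ∀ k l, k ≠ l →
      Disjoint ((Set.Ioo (px k) (px k + w k)) ×ˢ (Set.Ioo (py k) (py k + h k)))
               ((Set.Ioo (px l) (px l + w l)) ×ˢ (Set.Ioo (py l) (py l + h l)))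

/-- Tile `k` of the tiling `T` has aspect ratio `x` (in one of the two orientations). -/
def RectTiling.ratioOK {r : ℝ} (T : RectTiling r) (k : Fin T.m) (x : ℝ) : Prop :=
  T.h k / T.w k = x ∨ T.w k / T.h k = x

/-- The rectangle of aspect ratio `r` is tileable by rectangles with aspect
ratios among `X`. -/
def Tileable (r : ℝ) {n : ℕ} (X : Fin n → ℝ) : Prop :=
  ∃ T : RectTiling r, ∀ k, ∃ i, T.ratioOK k (X i)

/-- The rectangle of aspect ratio `r` admits a *diverse* tiling by rectangles
with aspect ratios `X 0, …, X (n-1)`: every tile has some ratio `X i`, and for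
every `i` some tile has ratio `X i`. -/
def DiverselyTileable (r : ℝ) {n : ℕ} (X : Fin n → ℝ) : Prop :=
  ∃ T : RectTiling r, (∀ k, ∃ i, T.ratioOK k (X i)) ∧ (∀ i, ∃ k, T.ratioOK k (X i))

open Finset

lemma Finset.exists_strictMonoOn_enum {α : Type*} [LinearOrder α] [Inhabited α] (s : Finset α) :
    ∃ (N : ℕ) (X : ℕ → α), StrictMonoOn X (Set.Iio N) ∧ ∀ c ∈ s, ∃ i < N, X i = c := by
  let e := s.orderEmbOfFin rfl
  refine ⟨#s, fun i => if h : i < #s then e ⟨i, h⟩ else default, ?_, fun c hc => ?_⟩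
  · intro i (hi : i < #s) j (hj : j < #s) hij
    simpa [hi, hj] using e.strictMono (show (⟨i, hi⟩ : Fin #s) < ⟨j, hj⟩ from hij)
  · obtain ⟨⟨i, hi⟩, rfl⟩ : c ∈ Set.range e := by rwa [Finset.range_orderEmbOfFin]
    exact ⟨i, hi, by simp [hi]⟩

lemma sum_Ico_prod_Ico_map_sub {M N P : Type*} [AddCommGroup M] [AddCommGroup N]
    [AddCommMonoid P] (B : M →+ N →+ P) (X : ℕ → M) (Y : ℕ → N) {a b c d : ℕ}
    (hab : a ≤ b) (hcd : c ≤ d) :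
    ∑ q ∈ Ico a b ×ˢ Ico c d, B (X (q.1 + 1) - X q.1) (Y (q.2 + 1) - Y q.2) =
      B (X b - X a) (Y d - Y c) := by
  rw [sum_product, ← sum_Ico_sub X hab, ← sum_Ico_sub Y hcd, map_sum]
  simp only [AddMonoidHom.finsetSum_apply, map_sum]
  exact sum_comm

section Midpoint

variable {X : ℕ → ℝ} {N i a b : ℕ}

lemma StrictMonoOn.mem_Ico_iff_midpoint_mem_Icc (hX : StrictMonoOn X (Set.Iio N))
    (hi : i + 1 < N) (ha : a < N) (hb : b < N) :
    i ∈ Ico a b ↔ (X i + X (i + 1)) / 2 ∈ Set.Icc (X a) (X b) := by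
  have hi' : i < N := by omega
  have hstep : X i < X (i + 1) := hX hi' hi (by omega)
  simp only [mem_Ico, Set.mem_Icc]
  constructor
  · rintro ⟨hai, hib⟩
    have := (hX.le_iff_le ha hi').2 hai
    have := (hX.le_iff_le hi hb).2 hib
    constructor <;> linarith
  · rintro ⟨h₁, h₂⟩
    have := (hX.lt_iff_lt ha hi).1 (by linarith)
    have := (hX.lt_iff_lt hi' hb).1 (by linarith)
    omega

lemma StrictMonoOn.mem_Ico_iff_midpoint_mem_Ioo (hX : StrictMonoOn X (Set.Iio N))
    (hi : i + 1 < N) (ha : a < N) (hb : b < N) :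
    i ∈ Ico a b ↔ (X i + X (i + 1)) / 2 ∈ Set.Ioo (X a) (X b) := by
  refine ⟨fun h => ?_, fun h =>
    (hX.mem_Ico_iff_midpoint_mem_Icc hi ha hb).2 (Set.Ioo_subset_Icc_self h)⟩
  have hi' : i < N := by omega
  have hstep : X i < X (i + 1) := hX hi' hi (by omega)
  have := (hX.le_iff_le ha hi').2 (mem_Ico.1 h).1
  have := (hX.le_iff_le hi hb).2 (mem_Ico.1 h).2
  constructor <;> linarith

end Midpoint

lemma mem_Ico_prod_Ico_iff {X Y : ℕ → ℝ} {N M a b c d : ℕ} (hX : StrictMonoOn X (Set.Iio N))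
    (hY : StrictMonoOn Y (Set.Iio M)) (ha : a < N) (hb : b < N) (hc : c < M) (hd : d < M)
    {q : ℕ × ℕ} (hq₁ : q.1 + 1 < N) (hq₂ : q.2 + 1 < M) :
    (q ∈ Ico a b ×ˢ Ico c d ↔ ((X q.1 + X (q.1 + 1)) / 2, (Y q.2 + Y (q.2 + 1)) / 2) ∈
      Set.Icc (X a) (X b) ×ˢ Set.Icc (Y c) (Y d)) ∧
    (q ∈ Ico a b ×ˢ Ico c d ↔ ((X q.1 + X (q.1 + 1)) / 2, (Y q.2 + Y (q.2 + 1)) / 2) ∈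
      Set.Ioo (X a) (X b) ×ˢ Set.Ioo (Y c) (Y d)) := by
  simp only [mem_product, Set.mem_prod]
  exact ⟨and_congr (hX.mem_Ico_iff_midpoint_mem_Icc hq₁ ha hb)
      (hY.mem_Ico_iff_midpoint_mem_Icc hq₂ hc hd),
    and_congr (hX.mem_Ico_iff_midpoint_mem_Ioo hq₁ ha hb)
      (hY.mem_Ico_iff_midpoint_mem_Ioo hq₂ hc hd)⟩

namespace RectTiling

variable {r : ℝ} (T : RectTiling r)

noncomputable def xCuts : Finset ℝ :=
  insert 0 (insert 1 (univ.image T.px ∪ univ.image fun k => T.px k + T.w k))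

noncomputable def yCuts : Finset ℝ :=
  insert 0 (insert r (univ.image T.py ∪ univ.image fun k => T.py k + T.h k))

lemma tile_subset (k : Fin T.m) :
    Set.Icc (T.px k) (T.px k + T.w k) ×ˢ Set.Icc (T.py k) (T.py k + T.h k) ⊆
      Set.Icc 0 1 ×ˢ Set.Icc 0 r :=
  T.cover ▸ Set.subset_iUnion
    (fun k => Set.Icc (T.px k) (T.px k + T.w k) ×ˢ Set.Icc (T.py k) (T.py k + T.h k)) k

/- When `X`, `Y` enumerate the cuts increasingly and `ι`, `κ` invert them, the index `(i, j)`
stands for the grid cell `[X i, X (i + 1)] × [Y j, Y (j + 1)]`. -/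
def tileCells (ι κ : ℝ → ℕ) (k : Fin T.m) : Finset (ℕ × ℕ) :=
  Ico (ι (T.px k)) (ι (T.px k + T.w k)) ×ˢ Ico (κ (T.py k)) (κ (T.py k + T.h k))

lemma Ico_prod_Ico_eq_biUnion_tileCells {N M : ℕ} {X Y : ℕ → ℝ} {ι κ : ℝ → ℕ}
    (hX : StrictMonoOn X (Set.Iio N)) (hY : StrictMonoOn Y (Set.Iio M))
    (hι : ∀ c ∈ T.xCuts, ι c < N ∧ X (ι c) = c)
    (hκ : ∀ c ∈ T.yCuts, κ c < M ∧ Y (κ c) = c) :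
    Ico (ι 0) (ι 1) ×ˢ Ico (κ 0) (κ r) = univ.biUnion (T.tileCells ι κ) ∧
      Set.PairwiseDisjoint ↑(univ : Finset (Fin T.m)) (T.tileCells ι κ) := by
  have hx : ∀ k, T.px k ∈ T.xCuts ∧ T.px k + T.w k ∈ T.xCuts := fun k => by simp [xCuts]
  have hy : ∀ k, T.py k ∈ T.yCuts ∧ T.py k + T.h k ∈ T.yCuts := fun k => by simp [yCuts]
  have hx₀ := hι 0 (by simp [xCuts]); have hx₁ := hι 1 (by simp [xCuts])
  have hy₀ := hκ 0 (by simp [yCuts]); have hyr := hκ r (by simp [yCuts])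
  have hbox (q : ℕ × ℕ) (hq₁ : q.1 + 1 < N) (hq₂ : q.2 + 1 < M) := by
    have := mem_Ico_prod_Ico_iff hX hY hx₀.1 hx₁.1 hy₀.1 hyr.1 hq₁ hq₂
    rwa [hx₀.2, hx₁.2, hy₀.2, hyr.2] at this
  have htile k (q : ℕ × ℕ) (hq₁ : q.1 + 1 < N) (hq₂ : q.2 + 1 < M) := by
    have := mem_Ico_prod_Ico_iff hX hY (hι _ (hx k).1).1 (hι _ (hx k).2).1
      (hκ _ (hy k).1).1 (hκ _ (hy k).2).1 hq₁ hq₂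
    rwa [(hι _ (hx k).1).2, (hι _ (hx k).2).2, (hκ _ (hy k).1).2, (hκ _ (hy k).2).2] at this
  have hbound : ∀ k, ∀ q ∈ T.tileCells ι κ k, q.1 + 1 < N ∧ q.2 + 1 < M := fun k q hq => by
    simp only [tileCells, mem_product, mem_Ico] at hq
    exact ⟨by linarith [(hι _ (hx k).2).1], by linarith [(hκ _ (hy k).2).1]⟩
  refine ⟨Finset.ext fun q => ⟨fun hq => ?_, fun hq => ?_⟩, fun k _ l _ hkl => ?_⟩
  · have hq₁ : q.1 + 1 < N := by simp only [mem_product, mem_Ico] at hq; linarith [hx₁.1]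
    have hq₂ : q.2 + 1 < M := by simp only [mem_product, mem_Ico] at hq; linarith [hyr.1]
    have hmid := (hbox q hq₁ hq₂).1.1 hq
    rw [T.cover, Set.mem_iUnion] at hmid
    obtain ⟨k, hk⟩ := hmid
    exact mem_biUnion.2 ⟨k, mem_univ k, (htile k q hq₁ hq₂).1.2 hk⟩
  · obtain ⟨k, -, hk⟩ := mem_biUnion.1 hq
    obtain ⟨hq₁, hq₂⟩ := hbound k q hk
    exact (hbox q hq₁ hq₂).1.2 (T.tile_subset k ((htile k q hq₁ hq₂).1.1 hk))
  · refine Finset.disjoint_left.2 fun q hqk hql => ?_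
    obtain ⟨hq₁, hq₂⟩ := hbound k q hqk
    exact Set.disjoint_left.1 (T.disj k l hkl) ((htile k q hq₁ hq₂).2.1 hqk)
      ((htile l q hq₁ hq₂).2.1 hql)

theorem map_one_eq_sum (hr : 0 ≤ r) (B : ℝ →+ ℝ →+ ℝ) :
    B 1 r = ∑ k, B (T.w k) (T.h k) := by
  classical
  obtain ⟨N, X, hX, hXs⟩ := T.xCuts.exists_strictMonoOn_enum
  obtain ⟨M, Y, hY, hYs⟩ := T.yCuts.exists_strictMonoOn_enum
  choose! ι hι using hXs
  choose! κ hκ using hYs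
  obtain ⟨hunion, hdisj⟩ := T.Ico_prod_Ico_eq_biUnion_tileCells hX hY hι hκ
  have hsum {x₀ x₁ y₀ y₁} (hx₀ : x₀ ∈ T.xCuts) (hx₁ : x₁ ∈ T.xCuts) (hy₀ : y₀ ∈ T.yCuts)
      (hy₁ : y₁ ∈ T.yCuts) (hx : x₀ ≤ x₁) (hy : y₀ ≤ y₁) :
      ∑ q ∈ Ico (ι x₀) (ι x₁) ×ˢ Ico (κ y₀) (κ y₁),
        B (X (q.1 + 1) - X q.1) (Y (q.2 + 1) - Y q.2) = B (x₁ - x₀) (y₁ - y₀) := by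
    rw [sum_Ico_prod_Ico_map_sub, (hι _ hx₀).2, (hι _ hx₁).2, (hκ _ hy₀).2, (hκ _ hy₁).2]
    · rwa [← hX.le_iff_le (hι _ hx₀).1 (hι _ hx₁).1, (hι _ hx₀).2, (hι _ hx₁).2]
    · rwa [← hY.le_iff_le (hκ _ hy₀).1 (hκ _ hy₁).1, (hκ _ hy₀).2, (hκ _ hy₁).2]
  calc B 1 r = B (1 - 0) (r - 0) := by simp
    _ = ∑ k, ∑ q ∈ T.tileCells ι κ k, B (X (q.1 + 1) - X q.1) (Y (q.2 + 1) - Y q.2) := by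
      rw [← sum_biUnion hdisj, ← hunion, hsum] <;> simp [xCuts, yCuts, hr]
    _ = ∑ k, B (T.w k) (T.h k) := sum_congr rfl fun k _ => by
      rw [tileCells, hsum] <;> simp [xCuts, yCuts, (T.w_pos k).le, (T.h_pos k).le]

end RectTiling

section LinearFunctional

variable {K V : Type*} [Field K] [AddCommGroup V] [Module K V]

lemma exists_linearMap_eq_one_eq_of_notMem_span {u v : V} (hu : u ≠ 0) (hv : v ∉ K ∙ u)
    (y : K) : ∃ G : V →ₗ[K] K, G u = 1 ∧ G v = y := by
  obtain ⟨G, hG, hGv⟩ :=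
    LinearMap.exists_extend_of_notMem (LinearEquiv.coord K V u hu).toLinearMap hv y
  refine ⟨G, ?_, hGv⟩
  simpa [LinearEquiv.coord_self] using congr($hG ⟨u, Submodule.mem_span_singleton_self u⟩)

lemma exists_linearMap_eq_one_ne_zero {u t : V} (hu : u ≠ 0) (ht : t ≠ 0) :
    ∃ G : V →ₗ[K] K, G u = 1 ∧ G t ≠ 0 := by
  by_cases htu : t ∈ K ∙ u
  · obtain ⟨c, rfl⟩ := Submodule.mem_span_singleton.1 htu
    obtain ⟨G, hG⟩ := LinearMap.exists_extend (LinearEquiv.coord K V u hu).toLinearMap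
    have hGu : G u = 1 := by
      simpa [LinearEquiv.coord_self] using congr($hG ⟨u, Submodule.mem_span_singleton_self u⟩)
    refine ⟨G, hGu, ?_⟩
    rw [map_smul, hGu, smul_eq_mul, mul_one]
    rintro rfl
    simp at ht
  · obtain ⟨G, hGu, hGt⟩ := exists_linearMap_eq_one_eq_of_notMem_span hu htu 1
    exact ⟨G, hGu, hGt ▸ one_ne_zero⟩

end LinearFunctional

lemma four_mul_quadratic_form {R : Type*} [CommRing R] (a b c x y : R) :
    4 * a * (a * x ^ 2 + b * x * y + c * y ^ 2) =
      (2 * a * x + b * y) ^ 2 - discrim a b c * y ^ 2 := by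
  rw [discrim]; ring

section QuadraticFormSign

variable {K : Type*} [Field K] [LinearOrder K] [IsStrictOrderedRing K] {a b c : K}

lemma quadratic_form_nonpos (ha : a < 0) (h : discrim a b c ≤ 0) (x y : K) :
    a * x ^ 2 + b * x * y + c * y ^ 2 ≤ 0 := by
  nlinarith [four_mul_quadratic_form a b c x y, sq_nonneg (2 * a * x + b * y), sq_nonneg y]

lemma quadratic_form_neg (ha : a < 0) (h : discrim a b c < 0) (x : K) {y : K} (hy : y ≠ 0) :
    a * x ^ 2 + b * x * y + c * y ^ 2 < 0 := by
  nlinarith [four_mul_quadratic_form a b c x y, sq_nonneg (2 * a * x + b * y), sq_pos_of_ne_zero hy]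

end QuadraticFormSign

section ConjugatePairing

variable {F : Type*} [Field F] [Algebra F ℝ] (σ : F →+* ℝ)

local notation "τ" => algebraMap F ℝ

def conjQuadForm (c : ℝ) (ξ : F) (u₁ u₂ : ℝ) : ℝ :=
  -τ ξ * u₁ ^ 2 + (τ ξ + σ ξ) * u₁ * u₂ + c * σ ξ * u₂ ^ 2

def conjDiscrim (c : ℝ) (ξ : F) : ℝ := discrim (-τ ξ) (τ ξ + σ ξ) (c * σ ξ)

noncomputable def conjPairing (G : ℝ →ₗ[F] F) (v c : ℝ) : ℝ →+ ℝ →+ ℝ :=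
  AddMonoidHom.mk' (fun s => AddMonoidHom.mk' (fun t =>
      -(v * τ (G s)) * (v * τ (G t)) + (v * τ (G s) * σ (G t) + σ (G s) * (v * τ (G t))) +
        c * σ (G s) * σ (G t))
      fun _ _ => by simp only [map_add]; ring)
    fun _ _ => by ext; simp only [map_add, AddMonoidHom.mk'_apply, AddMonoidHom.add_apply]; ring

lemma conjPairing_comm (G : ℝ →ₗ[F] F) (v c s t : ℝ) :
    conjPairing σ G v c s t = conjPairing σ G v c t s := by
  simp only [conjPairing, AddMonoidHom.mk'_apply]; ring

lemma conjPairing_apply_algebraMap_mul (G : ℝ →ₗ[F] F) (v c s : ℝ) (ξ : F) :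
    conjPairing σ G v c s (τ ξ * s) = conjQuadForm σ c ξ (v * τ (G s)) (σ (G s)) := by
  simp only [conjPairing, conjQuadForm, AddMonoidHom.mk'_apply, LinearMap.map_algebraMap_mul,
    Algebra.algebraMap_self, RingHom.id_apply, map_mul]
  ring

lemma RectTiling.exists_conjPairing_eq {r : ℝ} (T : RectTiling r) (G : ℝ →ₗ[F] F) (v c : ℝ)
    {k : Fin T.m} {ξ : F} (hk : T.ratioOK k (τ ξ)) :
    ∃ s : ℝ, (G (T.w k) ≠ 0 → G s ≠ 0) ∧
      conjPairing σ G v c (T.w k) (T.h k) = conjQuadForm σ c ξ (v * τ (G s)) (σ (G s)) := by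
  rcases hk with hk | hk
  · refine ⟨T.w k, id, ?_⟩
    rw [← conjPairing_apply_algebraMap_mul, ← hk, div_mul_cancel₀ _ (T.w_pos k).ne']
  · have hw : T.w k = τ ξ * T.h k := by rw [← hk, div_mul_cancel₀ _ (T.h_pos k).ne']
    refine ⟨T.h k, fun h hG => h ?_, ?_⟩
    · rw [hw, LinearMap.map_algebraMap_mul, hG, mul_zero]
    · rw [conjPairing_comm, ← conjPairing_apply_algebraMap_mul, ← hw]

theorem RectTiling.exists_algebraMap_eq_conj_neg {z : ℝ} (T : RectTiling z) (hz : 0 < z)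
    (hT : ∀ k, ∃ ξ : F, T.ratioOK k (τ ξ) ∧ σ ξ < 0) :
    ∃ ζ : F, τ ζ = z ∧ σ ζ < 0 := by
  -- with `v = 0` and `c = 1` the pairing is `σ (G s) * σ (G t)`
  have hσGz (G : ℝ →ₗ[F] F) (hG : G 1 = 1) : σ (G z) ≤ 0 := by
    have h := T.map_one_eq_sum hz.le (conjPairing σ G 0 1)
    have : conjPairing σ G 0 1 1 z = σ (G z) := by simp [conjPairing, hG]
    refine this ▸ h ▸ Finset.sum_nonpos fun k _ => ?_
    obtain ⟨ξ, hk, hξ⟩ := hT k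
    obtain ⟨s, -, hs⟩ := T.exists_conjPairing_eq σ G 0 1 hk
    rw [hs, conjQuadForm]
    nlinarith [sq_nonneg (σ (G s))]
  by_cases hzF : z ∈ (F ∙ (1 : ℝ))
  · obtain ⟨ζ, rfl⟩ := Submodule.mem_span_singleton.1 hzF
    obtain ⟨G, hG, -⟩ :=
      exists_linearMap_eq_one_ne_zero (K := F) (one_ne_zero (α := ℝ)) one_ne_zero
    have hζ : ζ ≠ 0 := by rintro rfl; simp at hz
    have hGζ : G (ζ • 1) = ζ := by rw [map_smul, hG, smul_eq_mul, mul_one]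
    have := hσGz G hG
    rw [hGζ] at this
    exact ⟨ζ, by simp [Algebra.smul_def], this.lt_of_ne ((map_ne_zero σ).2 hζ)⟩
  · obtain ⟨G, hG, hGz⟩ := exists_linearMap_eq_one_eq_of_notMem_span one_ne_zero hzF 1
    exact absurd (hσGz G hG) (by simp [hGz])

theorem RectTiling.conjDiscrim_neg {z : ℝ} (T : RectTiling z) {ζ : F} (hζ : τ ζ = z)
    (hz : 0 < z) (c : ℝ)
    (hT : ∀ k, ∃ ξ : F, T.ratioOK k (τ ξ) ∧ 0 < τ ξ ∧ conjDiscrim σ c ξ ≤ 0)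
    {k₀ : Fin T.m} {ξ₀ : F} (hk₀ : T.ratioOK k₀ (τ ξ₀)) (hξ₀ : 0 < τ ξ₀)
    (hd : conjDiscrim σ c ξ₀ < 0) :
    conjDiscrim σ c ζ < 0 := by
  subst hζ
  by_contra! hζd
  -- an isotropic direction `(v, 1)` of the form of `ζ` makes the left-hand side vanish
  obtain ⟨v, hv⟩ := exists_quadratic_eq_zero (neg_ne_zero.2 hz.ne')
    ⟨√(conjDiscrim σ c ζ), (Real.mul_self_sqrt hζd).symm⟩
  obtain ⟨G, hG, hGw⟩ := exists_linearMap_eq_one_ne_zero (K := F) one_ne_zero (T.w_pos k₀).ne'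
  have hlhs : conjPairing σ G v c 1 (τ ζ) = 0 := by
    have := conjPairing_apply_algebraMap_mul σ G v c 1 ζ
    rw [mul_one] at this
    rw [this, hG, conjQuadForm]
    simp only [map_one, mul_one]
    linear_combination hv
  have hle : ∀ k ∈ Finset.univ, conjPairing σ G v c (T.w k) (T.h k) ≤ 0 := fun k _ => by
    obtain ⟨ξ, hk, hξ, hξd⟩ := hT k
    obtain ⟨s, -, hs⟩ := T.exists_conjPairing_eq σ G v c hk
    exact hs ▸ quadratic_form_nonpos (neg_lt_zero.2 hξ) hξd _ _
  have hlt : conjPairing σ G v c (T.w k₀) (T.h k₀) < 0 := by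
    obtain ⟨s, hGs, hs⟩ := T.exists_conjPairing_eq σ G v c hk₀
    exact hs ▸ quadratic_form_neg (neg_lt_zero.2 hξ₀) hd _ ((map_ne_zero σ).2 (hGs hGw))
  have := Finset.sum_lt_sum hle ⟨k₀, Finset.mem_univ _, hlt⟩
  rw [← T.map_one_eq_sum hz.le, hlhs] at this
  simp at this

end ConjugatePairing

lemma discrim_add_mul_sub_mul (a b s m : ℝ) (h : m ^ 2 < s ^ 2) :
    discrim (-(a + b * s)) (a + b * s + (a - b * s)) (m ^ 2 / (s ^ 2 - m ^ 2) * (a - b * s)) =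
      4 * s ^ 2 / (s ^ 2 - m ^ 2) * (a ^ 2 - (m * b) ^ 2) := by
  have : s ^ 2 - m ^ 2 ≠ 0 := by linarith
  rw [discrim]
  field_simp
  ring

lemma pos_of_irrational_sqrt {x : ℝ} (h : Irrational √x) : 0 < x := by
  by_contra! hx
  exact h ⟨0, by simp [Real.sqrt_eq_zero'.2 hx]⟩

section QuadraticField

variable {p : ℚ}

noncomputable def sqrtEmbedding (p : ℚ) (s : ℝ) (hs : s * s = p) :
    QuadraticAlgebra ℚ p 0 →+* ℝ :=
  (QuadraticAlgebra.lift ⟨s, by simp [hs]⟩).toRingHom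

@[simp]
lemma sqrtEmbedding_apply {s : ℝ} (hs : s * s = p) (x : QuadraticAlgebra ℚ p 0) :
    sqrtEmbedding p s hs x = x.re + x.im * s := by
  simp [sqrtEmbedding, Rat.smul_def]

lemma fact_sq_ne_of_irrational_sqrt (hirr : Irrational √(p : ℝ)) :
    Fact (∀ r : ℚ, r ^ 2 ≠ p + 0 * r) := by
  refine ⟨fun r hr => hirr ⟨|r|, ?_⟩⟩
  rw [zero_mul, add_zero] at hr
  rw [← hr]
  push_cast
  exact (Real.sqrt_sq_eq_abs _).symm

theorem RectTiling.exists_eq_add_mul_sqrt_of_conj_neg (hirr : Irrational √(p : ℝ)) {z : ℝ}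
    (T : RectTiling z) (hz : 0 < z)
    (hT : ∀ k, ∃ a b : ℚ, T.ratioOK k (a + b * √p) ∧ a - b * √p < 0) :
    ∃ e f : ℚ, z = e + f * √p ∧ e - f * √p < 0 := by
  have hs : √p * √p = p := Real.mul_self_sqrt (pos_of_irrational_sqrt hirr).le
  have := fact_sq_ne_of_irrational_sqrt hirr
  let := (sqrtEmbedding p √p hs).toAlgebra
  obtain ⟨ζ, hζ, hσζ⟩ := T.exists_algebraMap_eq_conj_neg (sqrtEmbedding p (-√p) (by simpa)) hz
    fun k => by
      obtain ⟨a, b, hk, hab⟩ := hT k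
      exact ⟨⟨a, b⟩, by simpa [RingHom.algebraMap_toAlgebra] using hk,
        by simpa [← sub_eq_add_neg] using hab⟩
  refine ⟨ζ.re, ζ.im, ?_, ?_⟩
  · simpa [RingHom.algebraMap_toAlgebra] using hζ.symm
  · simpa [← sub_eq_add_neg] using hσζ

theorem RectTiling.abs_lt_mul_of_abs_le_mul (hirr : Irrational √(p : ℝ)) {e f : ℚ}
    (T : RectTiling (e + f * √p)) (hz : 0 < e + f * √p) (hf : 0 ≤ f) {m : ℝ} (hm₀ : 0 ≤ m)
    (hm : m < √p)
    (hT : ∀ k, ∃ a b : ℚ, T.ratioOK k (a + b * √p) ∧ 0 < a + b * √p ∧ |(a : ℝ)| ≤ m * b)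
    {k₀ : Fin T.m} {a₀ b₀ : ℚ} (hk₀ : T.ratioOK k₀ (a₀ + b₀ * √p)) (h₀ : 0 < a₀ + b₀ * √p)
    (hab₀ : |(a₀ : ℝ)| < m * b₀) :
    |(e : ℝ)| < m * f := by
  have hp := pos_of_irrational_sqrt hirr
  have hs : √p * √p = p := Real.mul_self_sqrt hp.le
  have hm' : m ^ 2 < √p ^ 2 := pow_lt_pow_left₀ hm hm₀ two_ne_zero
  have hκ : 0 < 4 * √p ^ 2 / (√p ^ 2 - m ^ 2) := by
    have := Real.sqrt_pos.2 hp
    have : 0 < √p ^ 2 - m ^ 2 := by linarith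
    positivity
  have := fact_sq_ne_of_irrational_sqrt hirr
  let := (sqrtEmbedding p √p hs).toAlgebra
  let σ := sqrtEmbedding p (-√p) (by simpa)
  have hdisc (x : QuadraticAlgebra ℚ p 0) : conjDiscrim σ (m ^ 2 / (√p ^ 2 - m ^ 2)) x =
      4 * √p ^ 2 / (√p ^ 2 - m ^ 2) * (x.re ^ 2 - (m * x.im) ^ 2) := by
    rw [← discrim_add_mul_sub_mul _ _ _ _ hm', conjDiscrim]
    simp [σ, RingHom.algebraMap_toAlgebra, ← sub_eq_add_neg]
  have := T.conjDiscrim_neg σ (ζ := ⟨e, f⟩) (by simp [RingHom.algebraMap_toAlgebra]) hz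
    (m ^ 2 / (√p ^ 2 - m ^ 2)) (fun k => ?_) (ξ₀ := ⟨a₀, b₀⟩)
    (by simpa [RingHom.algebraMap_toAlgebra] using hk₀)
    (by simpa [RingHom.algebraMap_toAlgebra] using h₀)
    (by
      rw [hdisc]
      have := abs_lt.1 hab₀
      exact mul_neg_of_pos_of_neg hκ (sub_neg.2 (sq_lt_sq' this.1 this.2)))
  · rw [hdisc] at this
    exact abs_lt_of_sq_lt_sq (sub_neg.1 (neg_of_mul_neg_right this hκ.le)) (by positivity)
  · obtain ⟨a, b, hk, hpos, hab⟩ := hT k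
    refine ⟨⟨a, b⟩, by simpa [RingHom.algebraMap_toAlgebra] using hk,
      by simpa [RingHom.algebraMap_toAlgebra] using hpos, ?_⟩
    rw [hdisc]
    have := abs_le.1 hab
    exact mul_nonpos_of_nonneg_of_nonpos hκ.le (sub_nonpos.2 (sq_le_sq' this.1 this.2))

end QuadraticField

lemma abs_div_ne_abs_div_of_irrational {q a b c d : ℚ} {s : ℝ} (hs : s * s = q) (hb : 0 < b)
    (hd : 0 < d) (hdiv : Irrational ((a + b * s) / (c + d * s)))
    (hmul : Irrational ((a + b * s) * (c + d * s))) :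
    |a| / b ≠ |c| / d := by
  intro h
  rw [div_eq_div_iff hb.ne' hd.ne', ← abs_of_pos hd, ← abs_of_pos hb, ← abs_mul, ← abs_mul,
    abs_eq_abs] at h
  rcases h with h | h
  · have hy : (c : ℝ) + d * s ≠ 0 := fun hy => hdiv ⟨0, by simp [hy]⟩
    refine hdiv ⟨b / d, ?_⟩
    have : (a : ℝ) * d = c * b := by exact_mod_cast h
    rw [eq_div_iff hy, Rat.cast_div, div_mul_eq_mul_div, div_eq_iff (by positivity)]
    linear_combination -this
  · refine hmul ⟨a * c + b * d * q, ?_⟩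
    have : (a : ℝ) * d = -(c * b) := by exact_mod_cast h
    push_cast
    linear_combination (-(b : ℝ) * d) * hs - s * this

lemma Finset.exists_lt_univ_sup' {ι α : Type*} [Fintype ι] [Nontrivial ι] [LinearOrder α]
    {f : ι → α} (hf : Function.Injective f) (H : (univ : Finset ι).Nonempty) :
    ∃ i, f i < univ.sup' H f := by
  obtain ⟨i₀, -, hi₀⟩ := exists_mem_eq_sup' H f
  obtain ⟨i, hi⟩ := exists_ne i₀
  exact ⟨i, (le_sup' f (mem_univ i)).lt_of_ne (hi₀ ▸ hf.ne hi)⟩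

lemma cast_univ_sup'_abs_div_lt {ι : Type*} [Fintype ι] (H : (univ : Finset ι).Nonempty)
    {a b : ι → ℚ} {s : ℝ} (hb : ∀ i, 0 < b i) (h : ∀ i, |(a i : ℝ)| < b i * s) :
    ((univ.sup' H fun i => |a i| / b i : ℚ) : ℝ) < s := by
  obtain ⟨i, -, hi⟩ := exists_mem_eq_sup' H fun i => |a i| / b i
  rw [hi, Rat.cast_div, Rat.cast_abs, div_lt_iff₀ (by exact_mod_cast hb i), mul_comm]
  exact h i

theorem diverse_tiling_neg_conj_necessary (p : ℚ)
    (hirr : Irrational (Real.sqrt p))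
    (n : ℕ) (hn : 2 ≤ n) (a b : Fin n → ℚ) (X : Fin n → ℝ)
    (hX : ∀ i, X i = (a i : ℝ) + (b i : ℝ) * Real.sqrt p)
    (hXpos : ∀ i, 0 < X i)
    (hdist : ∀ i j, i ≠ j → Irrational (X i / X j) ∧ Irrational (X i * X j))
    (hconj : ∀ i, (a i : ℝ) - (b i : ℝ) * Real.sqrt p < 0)
    (z : ℝ) (hz : 0 < z) (htile : DiverselyTileable z X) :
    ∃ e f : ℚ, z = (e : ℝ) + (f : ℝ) * Real.sqrt p ∧ 0 < f ∧
      |e| / f < Finset.univ.sup' ⟨⟨0, by omega⟩, Finset.mem_univ _⟩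
        (fun i => |a i| / b i) := by
  obtain ⟨T, hall, hdiv⟩ := htile
  have hs : √p * √p = p := Real.mul_self_sqrt (pos_of_irrational_sqrt hirr).le
  have habs i : |(a i : ℝ)| < b i * √p :=
    abs_lt.2 ⟨by linarith [hX i, hXpos i], by linarith [hconj i]⟩
  have hb i : 0 < b i := by
    exact_mod_cast pos_of_mul_pos_left ((abs_nonneg _).trans_lt (habs i)) (Real.sqrt_nonneg _)
  obtain ⟨e, f, rfl, hef⟩ := T.exists_eq_add_mul_sqrt_of_conj_neg hirr hz fun k =>
    (hall k).elim fun i hi => ⟨a i, b i, hX i ▸ hi, hconj i⟩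
  have hf : 0 < f := by
    exact_mod_cast pos_of_mul_pos_left (by linarith : (0 : ℝ) < f * √p) (Real.sqrt_nonneg _)
  have : Nontrivial (Fin n) := Fin.nontrivial_iff_two_le.2 hn
  obtain ⟨i₁, hi₁⟩ := exists_lt_univ_sup' (f := fun i => |a i| / b i)
    (fun i j hij => by_contra fun hne => abs_div_ne_abs_div_of_irrational hs (hb i) (hb j)
      (hX i ▸ hX j ▸ (hdist i j hne).1) (hX i ▸ hX j ▸ (hdist i j hne).2) hij)
    ⟨⟨0, by omega⟩, mem_univ _⟩
  obtain ⟨k₁, hk₁⟩ := hdiv i₁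
  have := T.abs_lt_mul_of_abs_le_mul hirr hz hf.le
    (by exact_mod_cast (div_nonneg (abs_nonneg _) (hb i₁).le).trans hi₁.le)
    (cast_univ_sup'_abs_div_lt _ hb habs)
    (fun k => (hall k).elim fun i hi => ⟨a i, b i, hX i ▸ hi, hX i ▸ hXpos i,
      by exact_mod_cast (div_le_iff₀ (hb i)).1 (le_sup' (fun i => |a i| / b i) (mem_univ i))⟩)
    (hX i₁ ▸ hk₁) (hX i₁ ▸ hXpos i₁) (by exact_mod_cast (div_lt_iff₀ (hb i₁)).1 hi₁)
  exact ⟨e, f, rfl, hf, (div_lt_iff₀ hf).2 (by exact_mod_cast this)⟩
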